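/- For all cd-monomials u, v: β(d u d c d v) = β(d u* d c d v), where u* is the reversal of u. -/

import Mathlib

open scoped TensorProduct

/-- cd-monomials: `false` is the letter `c`, `true` is the letter `d`. -/
abbrev Mon := List Bool

/-- The polynomial algebra `F = ℚ⟨c,d⟩`. -/
abbrev F := MonoidAlgebra ℚ (FreeMonoid Bool)

noncomputable def mono (w : Mon) : F := MonoidAlgebra.single (FreeMonoid.ofList w) 1

noncomputable def cF : F := mono [false]
noncomputable def dF : F := mono [true]

noncomputable def gLetter : Bool → F
  | false => dF
  | true  => cF * dF

noncomputable def gMon : Mon → F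
  | [] => 0
  | a :: t => gLetter a * mono t + mono [a] * gMon t

/-- The derivation `G` with `G c = d`, `G d = cd`. -/
noncomputable def G : F →ₗ[ℚ] F :=
  (Finsupp.lsum ℚ fun w => LinearMap.toSpanSingleton ℚ F (gMon (FreeMonoid.toList w))) ∘ₗ
    (MonoidAlgebra.coeffLinearEquiv ℚ).toLinearMap

/-- `Psi n` is the cd-index of the Boolean lattice of rank `n+1`. -/
noncomputable def Psi : ℕ → F
  | 0 => 1
  | n+1 => Psi n * cF + G (Psi n)

/-- degree of a cd-monomial (`c` has degree 1, `d` degree 2). -/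
def deg (w : Mon) : ℕ := w.length + w.count true

/-- `beta v` : coefficient of `v` in the cd-index of the Boolean lattice of rank `deg v + 1`. -/
noncomputable def beta (w : Mon) : ℚ := (Psi (deg w)).coeff (FreeMonoid.ofList w)

-- basic lemmas
lemma mono_append (s t : Mon) : mono (s ++ t) = mono s * mono t := by
  simp [mono, MonoidAlgebra.single_mul_single, FreeMonoid.ofList_append]

lemma mono_nil : mono [] = 1 := rfl

lemma F_lhom_ext {N : Type*} [AddCommMonoid N] [Module ℚ N] ⦃φ ψ : F →ₗ[ℚ] N⦄
    (h : ∀ a b, φ (MonoidAlgebra.single a b) = ψ (MonoidAlgebra.single a b)) : φ = ψ :=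
  MonoidAlgebra.lhom_ext' fun a => LinearMap.ext fun b => h a b

lemma G_mono (w : Mon) : G (mono w) = gMon w := by
  show (Finsupp.lsum ℚ fun w => LinearMap.toSpanSingleton ℚ F (gMon (FreeMonoid.toList w)))
      (Finsupp.single (FreeMonoid.ofList w) 1) = gMon w
  rw [Finsupp.lsum_single, LinearMap.toSpanSingleton_apply, one_smul, FreeMonoid.toList_ofList]

lemma single_eq_smul_mono (a : FreeMonoid Bool) (b : ℚ) :
    (MonoidAlgebra.single a b : F) = b • mono (FreeMonoid.toList a) := by
  rw [mono, FreeMonoid.ofList_toList, MonoidAlgebra.smul_single', mul_one]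

lemma gMon_append (s t : Mon) : gMon (s ++ t) = gMon s * mono t + mono s * gMon t := by
  induction s with
  | nil => simp [gMon, mono_nil]
  | cons a s ih =>
      show gLetter a * mono (s ++ t) + mono [a] * gMon (s ++ t) = _
      rw [ih, mono_append s t, show gMon (a :: s) = gLetter a * mono s + mono [a] * gMon s from rfl,
        show mono (a :: s) = mono ([a] ++ s) from rfl, mono_append [a] s]
      simp only [mul_add, add_mul, mul_assoc]
      abel


-- reversal
def revE : FreeMonoid Bool ≃ FreeMonoid Bool where
  toFun w := FreeMonoid.ofList (FreeMonoid.toList w).reverse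
  invFun w := FreeMonoid.ofList (FreeMonoid.toList w).reverse
  left_inv w := by simp
  right_inv w := by simp

noncomputable def R : F ≃ₗ[ℚ] F := MonoidAlgebra.mapDomainLinearEquiv ℚ ℚ revE

lemma R_mono (w : Mon) : R (mono w) = mono w.reverse := by
  show MonoidAlgebra.mapDomainLinearEquiv ℚ ℚ revE (MonoidAlgebra.single (FreeMonoid.ofList w) 1) = _
  rw [MonoidAlgebra.mapDomainLinearEquiv_single]
  rfl

noncomputable def g'Letter : Bool → F
  | false => dF
  | true  => dF * cF

noncomputable def g'Mon : Mon → F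
  | [] => 0
  | a :: t => g'Letter a * mono t + mono [a] * g'Mon t

noncomputable def G' : F →ₗ[ℚ] F :=
  (Finsupp.lsum ℚ fun w => LinearMap.toSpanSingleton ℚ F (g'Mon (FreeMonoid.toList w))) ∘ₗ
    (MonoidAlgebra.coeffLinearEquiv ℚ).toLinearMap

lemma G'_mono (w : Mon) : G' (mono w) = g'Mon w := by
  show (Finsupp.lsum ℚ fun w => LinearMap.toSpanSingleton ℚ F (g'Mon (FreeMonoid.toList w)))
      (Finsupp.single (FreeMonoid.ofList w) 1) = g'Mon w
  rw [Finsupp.lsum_single, LinearMap.toSpanSingleton_apply, one_smul, FreeMonoid.toList_ofList]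

lemma g'Mon_append (s t : Mon) : g'Mon (s ++ t) = g'Mon s * mono t + mono s * g'Mon t := by
  induction s with
  | nil => simp [g'Mon, mono_nil]
  | cons a s ih =>
      show g'Letter a * mono (s ++ t) + mono [a] * g'Mon (s ++ t) = _
      rw [ih, mono_append s t, show g'Mon (a :: s) = g'Letter a * mono s + mono [a] * g'Mon s from rfl,
        show mono (a :: s) = mono ([a] ++ s) from rfl, mono_append [a] s]
      simp only [mul_add, add_mul, mul_assoc]
      abel

lemma finsupp_single_eq_smul_mono (a : FreeMonoid Bool) (b : ℚ) :
    (MonoidAlgebra.single a b : F) = b • mono (FreeMonoid.toList a) := by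
  rw [mono, FreeMonoid.ofList_toList]
  show _ = b • MonoidAlgebra.single a 1
  rw [MonoidAlgebra.smul_single', mul_one]

lemma R_mul_mono (x : F) (s : Mon) : R (x * mono s) = mono s.reverse * R x := by
  have h : (R.toLinearMap.comp (LinearMap.mulRight ℚ (mono s))) =
      (LinearMap.mulLeft ℚ (mono s.reverse)).comp R.toLinearMap := by
    apply F_lhom_ext
    intro a b
    rw [finsupp_single_eq_smul_mono]
    simp only [map_smul, LinearMap.comp_apply, LinearEquiv.coe_coe]
    show b • R (mono (FreeMonoid.toList a) * mono s)
        = b • (mono s.reverse * R (mono (FreeMonoid.toList a)))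
    rw [← mono_append, R_mono, R_mono, List.reverse_append, mono_append]
  exact LinearMap.congr_fun h x

lemma R_mono_mul (s : Mon) (x : F) : R (mono s * x) = R x * mono s.reverse := by
  have h : (R.toLinearMap.comp (LinearMap.mulLeft ℚ (mono s))) =
      (LinearMap.mulRight ℚ (mono s.reverse)).comp R.toLinearMap := by
    apply F_lhom_ext
    intro a b
    rw [finsupp_single_eq_smul_mono]
    simp only [map_smul, LinearMap.comp_apply, LinearEquiv.coe_coe]
    show b • R (mono s * mono (FreeMonoid.toList a))
        = b • (R (mono (FreeMonoid.toList a)) * mono s.reverse)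
    rw [← mono_append, R_mono, R_mono, List.reverse_append, mono_append]
  exact LinearMap.congr_fun h x

lemma R_gLetter (a : Bool) : R (gLetter a) = g'Letter a := by
  cases a
  · exact R_mono [true]
  · show R (cF * mono [true]) = dF * cF
    rw [R_mul_mono cF [true], show cF = mono [false] from rfl, R_mono]
    rfl

lemma g'Mon_single (a : Bool) : g'Mon [a] = g'Letter a := by
  show g'Letter a * mono [] + mono [a] * g'Mon [] = g'Letter a
  simp [g'Mon, mono_nil]

lemma R_gMon (w : Mon) : R (gMon w) = g'Mon w.reverse := by
  induction w with
  | nil => simp [gMon, g'Mon]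
  | cons a t ih =>
      show R (gLetter a * mono t + mono [a] * gMon t) = _
      rw [map_add, R_mul_mono (gLetter a) t, R_gLetter, R_mono_mul [a], ih]
      rw [show (a :: t).reverse = t.reverse ++ [a] by simp, g'Mon_append, g'Mon_single]
      rw [show (([a] : Mon)).reverse = [a] from rfl]
      abel

lemma R_G (x : F) : R (G x) = G' (R x) := by
  have h : (R.toLinearMap.comp G) = G'.comp R.toLinearMap := by
    apply F_lhom_ext
    intro a b
    rw [finsupp_single_eq_smul_mono]
    simp only [map_smul, LinearMap.comp_apply, LinearEquiv.coe_coe]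
    show b • R (G (mono (FreeMonoid.toList a))) = b • G' (R (mono (FreeMonoid.toList a)))
    rw [G_mono, R_gMon, R_mono, G'_mono]
  exact LinearMap.congr_fun h x

lemma letter_eq (a : Bool) : mono [a] * cF + gLetter a = cF * mono [a] + g'Letter a := by
  cases a
  · rfl
  · show dF * cF + cF * dF = cF * dF + dF * cF
    abel

lemma lam_eq_mono (w : Mon) : mono w * cF + gMon w = cF * mono w + g'Mon w := by
  induction w with
  | nil => simp [gMon, g'Mon, mono_nil]
  | cons a t ih =>
      rw [show mono (a :: t) = mono ([a] ++ t) from rfl, mono_append,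
        show gMon (a :: t) = gLetter a * mono t + mono [a] * gMon t from rfl,
        show g'Mon (a :: t) = g'Letter a * mono t + mono [a] * g'Mon t from rfl]
      calc mono [a] * mono t * cF + (gLetter a * mono t + mono [a] * gMon t)
          = mono [a] * (mono t * cF + gMon t) + gLetter a * mono t := by
            simp only [mul_add, mul_assoc]; abel
        _ = mono [a] * (cF * mono t + g'Mon t) + gLetter a * mono t := by rw [ih]
        _ = (mono [a] * cF + gLetter a) * mono t + mono [a] * g'Mon t := by
            simp only [mul_add, add_mul, mul_assoc]; abel
        _ = (cF * mono [a] + g'Letter a) * mono t + mono [a] * g'Mon t := by rw [letter_eq]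
        _ = _ := by simp only [mul_add, add_mul, mul_assoc]; abel

lemma lam_eq (x : F) : x * cF + G x = cF * x + G' x := by
  have h : (LinearMap.mulRight ℚ cF + G) = (LinearMap.mulLeft ℚ cF + G') := by
    apply F_lhom_ext
    intro a b
    rw [finsupp_single_eq_smul_mono]
    simp only [map_smul, LinearMap.add_apply]
    show b • (mono (FreeMonoid.toList a) * cF + G (mono (FreeMonoid.toList a)))
        = b • (cF * mono (FreeMonoid.toList a) + G' (mono (FreeMonoid.toList a)))
    rw [G_mono, G'_mono, lam_eq_mono]
  have := LinearMap.congr_fun h x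
  simpa using this

lemma R_Psi (n : ℕ) : R (Psi n) = Psi n := by
  induction n with
  | zero => show R (Psi 0) = Psi 0; rw [show Psi 0 = 1 from rfl, ← mono_nil, R_mono]; rfl
  | succ n ih =>
      show R (Psi n * cF + G (Psi n)) = Psi n * cF + G (Psi n)
      rw [map_add, show cF = mono [false] from rfl, R_mul_mono, R_G, ih]
      rw [show (([false] : Mon)).reverse = [false] from rfl]
      exact (lam_eq (Psi n)).symm

lemma coeff_rev (n : ℕ) (w : Mon) :
    (Psi n).coeff (FreeMonoid.ofList w) = (Psi n).coeff (FreeMonoid.ofList w.reverse) := by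
  conv_lhs => rw [← R_Psi n]
  show (MonoidAlgebra.mapDomainLinearEquiv ℚ ℚ revE (Psi n)).coeff (FreeMonoid.ofList w) = _
  rw [MonoidAlgebra.coeff_mapDomainLinearEquiv, Finsupp.equivMapDomain_apply]
  rfl

-- the coproduct
noncomputable def dLetter : Bool → F ⊗[ℚ] F
  | false => (2:ℚ) • ((1:F) ⊗ₜ[ℚ] (1:F))
  | true  => cF ⊗ₜ[ℚ] (1:F) + (1:F) ⊗ₜ[ℚ] cF

noncomputable def dMon : Mon → F ⊗[ℚ] F
  | [] => 0
  | a :: t => dLetter a * ((1:F) ⊗ₜ[ℚ] mono t) + (mono [a] ⊗ₜ[ℚ] (1:F)) * dMon t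

noncomputable def Delta : F →ₗ[ℚ] F ⊗[ℚ] F :=
  (Finsupp.lsum ℚ fun w => LinearMap.toSpanSingleton ℚ (F ⊗[ℚ] F) (dMon (FreeMonoid.toList w))) ∘ₗ
    (MonoidAlgebra.coeffLinearEquiv ℚ).toLinearMap

lemma Delta_mono (w : Mon) : Delta (mono w) = dMon w := by
  show (Finsupp.lsum ℚ fun w => LinearMap.toSpanSingleton ℚ (F ⊗[ℚ] F) (dMon (FreeMonoid.toList w)))
      (Finsupp.single (FreeMonoid.ofList w) 1) = dMon w
  rw [Finsupp.lsum_single, LinearMap.toSpanSingleton_apply, one_smul, FreeMonoid.toList_ofList]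

noncomputable def Lam : F →ₗ[ℚ] F := LinearMap.mulRight ℚ cF + G

lemma Lam_apply (x : F) : Lam x = x * cF + G x := rfl

lemma Psi_succ (n : ℕ) : Psi (n+1) = Lam (Psi n) := rfl

lemma gMon_single (a : Bool) : gMon [a] = gLetter a := by
  show gLetter a * mono [] + mono [a] * gMon [] = gLetter a
  simp [gMon, mono_nil]

lemma Lam_mono (w : Mon) : Lam (mono w) = mono w * cF + gMon w := by
  rw [Lam_apply, G_mono]

lemma Lam_one : Lam 1 = cF := by
  rw [← mono_nil, Lam_mono]
  simp [gMon, mono_nil]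

lemma Lam_letter_mul (a : Bool) (x : F) :
    Lam (mono [a] * x) = mono [a] * Lam x + gLetter a * x := by
  have h : Lam.comp (LinearMap.mulLeft ℚ (mono [a])) =
      (LinearMap.mulLeft ℚ (mono [a])).comp Lam + LinearMap.mulLeft ℚ (gLetter a) := by
    apply F_lhom_ext
    intro w b
    rw [finsupp_single_eq_smul_mono]
    simp only [map_smul, LinearMap.comp_apply, LinearMap.add_apply]
    show b • Lam (mono [a] * mono (FreeMonoid.toList w))
        = b • (mono [a] * Lam (mono (FreeMonoid.toList w))
          + gLetter a * mono (FreeMonoid.toList w))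
    rw [← mono_append, Lam_mono, Lam_mono]
    congr 1
    rw [show ([a] ++ FreeMonoid.toList w) = a :: FreeMonoid.toList w from rfl,
      show gMon (a :: FreeMonoid.toList w)
        = gLetter a * mono (FreeMonoid.toList w) + mono [a] * gMon (FreeMonoid.toList w) from rfl,
      show mono (a :: FreeMonoid.toList w) = mono ([a] ++ FreeMonoid.toList w) from rfl,
      mono_append]
    simp only [mul_add, mul_assoc]
    abel
  exact LinearMap.congr_fun h x

lemma Lam_cF : Lam cF = cF * cF + dF := by
  rw [show cF = mono [false] from rfl, Lam_mono, gMon_single]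
  rfl

lemma Delta_letter_mul (a : Bool) (x : F) :
    Delta (mono [a] * x)
      = dLetter a * ((1:F) ⊗ₜ[ℚ] x) + (mono [a] ⊗ₜ[ℚ] (1:F)) * Delta x := by
  have h : Delta.comp (LinearMap.mulLeft ℚ (mono [a])) =
      (LinearMap.mulLeft ℚ (dLetter a)).comp ((TensorProduct.mk ℚ F F) 1) +
      (LinearMap.mulLeft ℚ (mono [a] ⊗ₜ[ℚ] (1:F))).comp Delta := by
    apply F_lhom_ext
    intro w b
    rw [finsupp_single_eq_smul_mono]
    simp only [map_smul, LinearMap.comp_apply, LinearMap.add_apply]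
    show b • Delta (mono [a] * mono (FreeMonoid.toList w))
        = b • (dLetter a * ((1:F) ⊗ₜ[ℚ] mono (FreeMonoid.toList w))
          + (mono [a] ⊗ₜ[ℚ] (1:F)) * Delta (mono (FreeMonoid.toList w)))
    rw [← mono_append, Delta_mono, Delta_mono,
      show ([a] ++ FreeMonoid.toList w) = a :: FreeMonoid.toList w from rfl]
    rfl
  exact LinearMap.congr_fun h x

lemma dMon_snoc (w : Mon) :
    dMon (w ++ [false])
      = dMon w * ((1:F) ⊗ₜ[ℚ] cF) + (2:ℚ) • (mono w ⊗ₜ[ℚ] (1:F)) := by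
  induction w with
  | nil =>
      show dLetter false * ((1:F) ⊗ₜ[ℚ] mono []) + (mono [false] ⊗ₜ[ℚ] (1:F)) * dMon [] = _
      rw [show dMon ([] : Mon) = 0 from rfl]
      simp only [mono_nil, mul_zero, zero_mul, add_zero, zero_add, dLetter, smul_mul_assoc,
        Algebra.TensorProduct.tmul_mul_tmul, one_mul, mul_one]
  | cons a t ih =>
      show dLetter a * ((1:F) ⊗ₜ[ℚ] mono (t ++ [false]))
          + (mono [a] ⊗ₜ[ℚ] (1:F)) * dMon (t ++ [false]) = _
      rw [ih, mono_append, show (mono [false] : F) = cF from rfl]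
      show _ = (dLetter a * ((1:F) ⊗ₜ[ℚ] mono t) + (mono [a] ⊗ₜ[ℚ] (1:F)) * dMon t)
          * ((1:F) ⊗ₜ[ℚ] cF) + (2:ℚ) • (mono (a :: t) ⊗ₜ[ℚ] (1:F))
      rw [show mono (a :: t) = mono [a] * mono t from mono_append [a] t]
      rw [show ((1:F) ⊗ₜ[ℚ] (mono t * cF)) = ((1:F) ⊗ₜ[ℚ] mono t) * ((1:F) ⊗ₜ[ℚ] cF) by
        rw [Algebra.TensorProduct.tmul_mul_tmul, one_mul]]
      rw [show (mono [a] * mono t) ⊗ₜ[ℚ] (1:F) = (mono [a] ⊗ₜ[ℚ] (1:F)) * (mono t ⊗ₜ[ℚ] (1:F)) by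
        rw [Algebra.TensorProduct.tmul_mul_tmul, one_mul]]
      simp only [mul_add, add_mul, mul_smul_comm, mul_assoc]
      abel

lemma Delta_mul_cF (x : F) :
    Delta (x * cF) = Delta x * ((1:F) ⊗ₜ[ℚ] cF) + (2:ℚ) • (x ⊗ₜ[ℚ] (1:F)) := by
  have h : Delta.comp (LinearMap.mulRight ℚ cF) =
      (LinearMap.mulRight ℚ ((1:F) ⊗ₜ[ℚ] cF)).comp Delta +
      (2:ℚ) • ((TensorProduct.mk ℚ F F).flip 1) := by
    apply F_lhom_ext
    intro w b
    rw [finsupp_single_eq_smul_mono]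
    simp only [map_smul, LinearMap.comp_apply, LinearMap.add_apply, LinearMap.smul_apply]
    show b • Delta (mono (FreeMonoid.toList w) * cF)
        = b • (Delta (mono (FreeMonoid.toList w)) * ((1:F) ⊗ₜ[ℚ] cF)
          + (2:ℚ) • (mono (FreeMonoid.toList w) ⊗ₜ[ℚ] (1:F)))
    rw [show cF = mono [false] from rfl, ← mono_append, Delta_mono, Delta_mono, dMon_snoc]
    rfl
  exact LinearMap.congr_fun h x

noncomputable def LamR : F ⊗[ℚ] F →ₗ[ℚ] F ⊗[ℚ] F := LinearMap.rTensor F Lam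
noncomputable def LamL : F ⊗[ℚ] F →ₗ[ℚ] F ⊗[ℚ] F := LinearMap.lTensor F Lam

lemma LamR_tmul (x y : F) : LamR (x ⊗ₜ[ℚ] y) = Lam x ⊗ₜ[ℚ] y := rfl
lemma LamL_tmul (x y : F) : LamL (x ⊗ₜ[ℚ] y) = x ⊗ₜ[ℚ] Lam y := rfl

lemma two_smul_eq (z : F ⊗[ℚ] F) : (2:ℚ) • z = z + z := by
  rw [show (2:ℚ) = 1 + 1 by norm_num, add_smul, one_smul]

lemma dletter_false_mul (z : F ⊗[ℚ] F) : dLetter false * z = (2:ℚ) • z := by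
  show ((2:ℚ) • ((1:F) ⊗ₜ[ℚ] (1:F))) * z = (2:ℚ) • z
  rw [smul_mul_assoc, ← Algebra.TensorProduct.one_def, one_mul]

lemma dletter_true_mul (y : F) :
    dLetter true * ((1:F) ⊗ₜ[ℚ] y) = cF ⊗ₜ[ℚ] y + (1:F) ⊗ₜ[ℚ] (cF * y) := by
  show (cF ⊗ₜ[ℚ] (1:F) + (1:F) ⊗ₜ[ℚ] cF) * ((1:F) ⊗ₜ[ℚ] y) = _
  rw [add_mul, Algebra.TensorProduct.tmul_mul_tmul, Algebra.TensorProduct.tmul_mul_tmul,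
    one_mul, mul_one, one_mul]

lemma LamR_mul (a : Bool) (z : F ⊗[ℚ] F) :
    LamR ((mono [a] ⊗ₜ[ℚ] (1:F)) * z)
      = (mono [a] ⊗ₜ[ℚ] (1:F)) * LamR z + (gLetter a ⊗ₜ[ℚ] (1:F)) * z := by
  induction z using TensorProduct.induction_on with
  | zero => simp
  | tmul p q =>
      rw [Algebra.TensorProduct.tmul_mul_tmul, one_mul, LamR_tmul, LamR_tmul,
        Lam_letter_mul, TensorProduct.add_tmul, Algebra.TensorProduct.tmul_mul_tmul,
        Algebra.TensorProduct.tmul_mul_tmul]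
      simp only [one_mul]
  | add u v hu hv =>
      rw [mul_add, map_add, hu, hv, map_add, mul_add, mul_add]
      abel

lemma LamL_mul (a : Bool) (z : F ⊗[ℚ] F) :
    LamL ((mono [a] ⊗ₜ[ℚ] (1:F)) * z) = (mono [a] ⊗ₜ[ℚ] (1:F)) * LamL z := by
  induction z using TensorProduct.induction_on with
  | zero => simp
  | tmul p q =>
      rw [Algebra.TensorProduct.tmul_mul_tmul, one_mul, LamL_tmul, LamL_tmul,
        Algebra.TensorProduct.tmul_mul_tmul, one_mul]
  | add u v hu hv => rw [mul_add, map_add, hu, hv, map_add, mul_add]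

lemma LamR_dletter_false (y : F) :
    LamR (dLetter false * ((1:F) ⊗ₜ[ℚ] y)) = (2:ℚ) • (cF ⊗ₜ[ℚ] y) := by
  rw [dletter_false_mul, map_smul, LamR_tmul, Lam_one]

lemma LamL_dletter_false (y : F) :
    LamL (dLetter false * ((1:F) ⊗ₜ[ℚ] y)) = (2:ℚ) • ((1:F) ⊗ₜ[ℚ] Lam y) := by
  rw [dletter_false_mul, map_smul, LamL_tmul]

lemma LamR_dletter_true (y : F) :
    LamR (dLetter true * ((1:F) ⊗ₜ[ℚ] y))
      = (cF * cF) ⊗ₜ[ℚ] y + dF ⊗ₜ[ℚ] y + cF ⊗ₜ[ℚ] (cF * y) := by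
  rw [dletter_true_mul, map_add, LamR_tmul, LamR_tmul, Lam_one, Lam_cF,
    TensorProduct.add_tmul]

lemma LamL_dletter_true (y : F) :
    LamL (dLetter true * ((1:F) ⊗ₜ[ℚ] y))
      = cF ⊗ₜ[ℚ] Lam y + (1:F) ⊗ₜ[ℚ] (cF * Lam y) + (1:F) ⊗ₜ[ℚ] (dF * y) := by
  rw [dletter_true_mul, map_add, LamL_tmul, LamL_tmul,
    show cF = mono [false] from rfl, Lam_letter_mul false y,
    show (gLetter false : F) = dF from rfl, TensorProduct.tmul_add]
  abel

lemma main_mono (w : Mon) :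
    Delta (Lam (mono w))
      = LamR (Delta (mono w)) + LamL (Delta (mono w))
        + mono w ⊗ₜ[ℚ] (1:F) + (1:F) ⊗ₜ[ℚ] mono w := by
  induction w with
  | nil =>
      have h1 : Lam (mono []) = mono [false] := by
        rw [Lam_mono, show gMon ([] : Mon) = 0 from rfl, add_zero, mono_nil, one_mul]
        rfl
      rw [h1, Delta_mono, Delta_mono]
      show dLetter false * ((1:F) ⊗ₜ[ℚ] mono []) + (mono [false] ⊗ₜ[ℚ] (1:F)) * dMon []
          = LamR (dMon []) + LamL (dMon []) + mono [] ⊗ₜ[ℚ] (1:F) + (1:F) ⊗ₜ[ℚ] mono []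
      rw [show dMon ([] : Mon) = 0 from rfl]
      simp only [mul_zero, add_zero, map_zero, zero_add, mono_nil, dletter_false_mul]
      rw [two_smul_eq]
  | cons a t ih =>
      rw [show mono (a::t) = mono [a] * mono t from mono_append [a] t,
        Lam_letter_mul a (mono t), map_add, Delta_letter_mul a (Lam (mono t)), ih,
        Delta_letter_mul a (mono t), map_add, map_add, LamR_mul a (Delta (mono t)),
        LamL_mul a (Delta (mono t))]
      cases a
      · -- letter c
        rw [show (gLetter false : F) = dF from rfl, show (dF : F) = mono [true] from rfl,
          Delta_letter_mul true (mono t), show (mono [true] : F) = dF from rfl,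
          show (mono [false] : F) = cF from rfl,
          LamR_dletter_false, LamL_dletter_false, dletter_false_mul, dletter_true_mul]
        simp only [mul_add, Algebra.TensorProduct.tmul_mul_tmul, one_mul, mul_one,
          two_smul_eq]
        abel
      · -- letter d
        rw [show (gLetter true : F) = cF * dF from rfl, mul_assoc,
          show (cF : F) = mono [false] from rfl,
          Delta_letter_mul false (dF * mono t),
          show (dF : F) = mono [true] from rfl,
          Delta_letter_mul true (mono t),
          show (mono [true] : F) = dF from rfl, show (mono [false] : F) = cF from rfl,
          LamR_dletter_true, LamL_dletter_true, dletter_false_mul, dletter_true_mul,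
          dletter_true_mul]
        simp only [mul_add, add_mul, ← mul_assoc, Algebra.TensorProduct.tmul_mul_tmul,
          one_mul, mul_one, two_smul_eq]
        abel

lemma main_eq (x : F) :
    Delta (Lam x)
      = LamR (Delta x) + LamL (Delta x) + x ⊗ₜ[ℚ] (1:F) + (1:F) ⊗ₜ[ℚ] x := by
  have h : Delta.comp Lam
      = LamR.comp Delta + LamL.comp Delta + (TensorProduct.mk ℚ F F).flip 1
        + TensorProduct.mk ℚ F F 1 := by
    apply F_lhom_ext
    intro w b
    rw [finsupp_single_eq_smul_mono]
    simp only [map_smul, LinearMap.comp_apply, LinearMap.add_apply]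
    show b • Delta (Lam (mono (FreeMonoid.toList w)))
        = b • (LamR (Delta (mono (FreeMonoid.toList w))) + LamL (Delta (mono (FreeMonoid.toList w)))
            + mono (FreeMonoid.toList w) ⊗ₜ[ℚ] (1:F) + (1:F) ⊗ₜ[ℚ] mono (FreeMonoid.toList w))
    rw [main_mono]
  exact LinearMap.congr_fun h x

lemma Delta_Psi (n : ℕ) :
    Delta (Psi n)
      = ∑ k ∈ Finset.range n, ((n+1).choose (k+1) : ℚ) • (Psi k ⊗ₜ[ℚ] Psi (n - (k+1))) := by
  induction n with
  | zero =>
      rw [show Psi 0 = mono [] from rfl, Delta_mono, show dMon ([] : Mon) = 0 from rfl]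
      simp
  | succ n ih =>
      rw [Psi_succ, main_eq, ih]
      have hR : LamR (∑ k ∈ Finset.range n, ((n+1).choose (k+1) : ℚ) • (Psi k ⊗ₜ[ℚ] Psi (n - (k+1))))
          = ∑ k ∈ Finset.range n, ((n+1).choose (k+1) : ℚ) • (Psi (k+1) ⊗ₜ[ℚ] Psi (n - (k+1))) := by
        rw [map_sum]
        refine Finset.sum_congr rfl fun k hk => ?_
        rw [map_smul, LamR_tmul, ← Psi_succ]
      have hL : LamL (∑ k ∈ Finset.range n, ((n+1).choose (k+1) : ℚ) • (Psi k ⊗ₜ[ℚ] Psi (n - (k+1))))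
          = ∑ k ∈ Finset.range n, ((n+1).choose (k+1) : ℚ) • (Psi k ⊗ₜ[ℚ] Psi (n + 1 - (k+1))) := by
        rw [map_sum]
        refine Finset.sum_congr rfl fun k hk => ?_
        rw [map_smul, LamL_tmul, ← Psi_succ]
        congr 3
        have : k < n := Finset.mem_range.mp hk
        omega
      rw [hR, hL]
      have key : ∑ k ∈ Finset.range (n+1), ((n+2).choose (k+1) : ℚ) • (Psi k ⊗ₜ[ℚ] Psi (n + 1 - (k+1)))
          = (∑ k ∈ Finset.range (n+1), ((n+1).choose k : ℚ) • (Psi k ⊗ₜ[ℚ] Psi (n + 1 - (k+1))))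
            + ∑ k ∈ Finset.range (n+1), ((n+1).choose (k+1) : ℚ) • (Psi k ⊗ₜ[ℚ] Psi (n + 1 - (k+1))) := by
        rw [← Finset.sum_add_distrib]
        refine Finset.sum_congr rfl fun k hk => ?_
        rw [← add_smul]
        congr 1
        rw [show (n+2).choose (k+1) = (n+1).choose k + (n+1).choose (k+1) from Nat.choose_succ_succ (n+1) k]
        push_cast
        ring
      rw [key]
      have h1 : ∑ k ∈ Finset.range (n+1), ((n+1).choose k : ℚ) • (Psi k ⊗ₜ[ℚ] Psi (n + 1 - (k+1)))
          = (1:F) ⊗ₜ[ℚ] Psi n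
            + ∑ k ∈ Finset.range n, ((n+1).choose (k+1) : ℚ) • (Psi (k+1) ⊗ₜ[ℚ] Psi (n - (k+1))) := by
        rw [Finset.sum_range_succ']
        simp only [Nat.choose_zero_right, Nat.cast_one, one_smul, Nat.add_sub_cancel]
        rw [add_comm]
        congr 1
        refine Finset.sum_congr rfl fun k hk => ?_
        rw [show n + 1 - (k + 1 + 1) = n - (k + 1) from by omega]
      have h2 : ∑ k ∈ Finset.range (n+1), ((n+1).choose (k+1) : ℚ) • (Psi k ⊗ₜ[ℚ] Psi (n + 1 - (k+1)))
          = Psi n ⊗ₜ[ℚ] (1:F)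
            + ∑ k ∈ Finset.range n, ((n+1).choose (k+1) : ℚ) • (Psi k ⊗ₜ[ℚ] Psi (n + 1 - (k+1))) := by
        rw [Finset.sum_range_succ, Nat.choose_self, Nat.cast_one, one_smul, add_comm]
        congr 1
        rw [show n + 1 - (n+1) = 0 from by omega]
        rfl
      rw [h1, h2]
      abel

noncomputable def ev (w : Mon) : F →ₗ[ℚ] ℚ :=
  Finsupp.lapply (FreeMonoid.ofList w) ∘ₗ (MonoidAlgebra.coeffLinearEquiv ℚ).toLinearMap

lemma ev_apply (w : Mon) (x : F) : ev w x = x.coeff (FreeMonoid.ofList w) := rfl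

lemma ev_mono (A w : Mon) : ev A (mono w) = if w = A then 1 else 0 := by
  classical
  rw [ev_apply, mono]
  show Finsupp.single (FreeMonoid.ofList w) 1 (FreeMonoid.ofList A) = _
  rw [Finsupp.single_apply]
  by_cases h : w = A
  · subst h; simp
  · rw [if_neg (fun hh => h (FreeMonoid.ofList.injective hh)), if_neg h]

lemma ev_one (A : Mon) : ev A 1 = if A = [] then 1 else 0 := by
  rw [← mono_nil, ev_mono]
  by_cases h : A = [] <;> simp [h, eq_comm]

lemma ev_cons_mul (a : Bool) (A : Mon) (x : F) : ev (a :: A) (mono [a] * x) = ev A x := by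
  have h : (ev (a :: A)).comp (LinearMap.mulLeft ℚ (mono [a])) = ev A := by
    apply F_lhom_ext
    intro w b
    rw [finsupp_single_eq_smul_mono]
    simp only [map_smul, LinearMap.comp_apply]
    show b • ev (a :: A) (mono [a] * mono (FreeMonoid.toList w)) = b • ev A (mono (FreeMonoid.toList w))
    rw [← mono_append, ev_mono, ev_mono, show ([a] ++ FreeMonoid.toList w) = a :: FreeMonoid.toList w from rfl]
    simp
  exact LinearMap.congr_fun h x

lemma ev_mul_ne (a : Bool) (A : Mon) (h : ∀ A', A ≠ a :: A') (x : F) :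
    ev A (mono [a] * x) = 0 := by
  have hcomp : (ev A).comp (LinearMap.mulLeft ℚ (mono [a])) = 0 := by
    apply F_lhom_ext
    intro w b
    rw [finsupp_single_eq_smul_mono]
    simp only [map_smul, LinearMap.comp_apply, LinearMap.zero_apply]
    show b • ev A (mono [a] * mono (FreeMonoid.toList w)) = b • (0:ℚ)
    rw [← mono_append, ev_mono, show ([a] ++ FreeMonoid.toList w) = a :: FreeMonoid.toList w from rfl]
    rw [if_neg fun hh => h _ hh.symm]
  exact LinearMap.congr_fun hcomp x

noncomputable def phi (A B : Mon) : F ⊗[ℚ] F →ₗ[ℚ] ℚ :=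
  TensorProduct.lift ((LinearMap.mul ℚ ℚ).compl₁₂ (ev A) (ev B))

lemma phi_tmul (A B : Mon) (x y : F) : phi A B (x ⊗ₜ[ℚ] y) = ev A x * ev B y := rfl

lemma phi_lmul_cons (a : Bool) (A B : Mon) (z : F ⊗[ℚ] F) :
    phi (a :: A) B ((mono [a] ⊗ₜ[ℚ] (1:F)) * z) = phi A B z := by
  induction z using TensorProduct.induction_on with
  | zero => simp
  | tmul p q =>
      rw [Algebra.TensorProduct.tmul_mul_tmul, one_mul, phi_tmul, phi_tmul, ev_cons_mul]
  | add u v hu hv => rw [mul_add, map_add, hu, hv, map_add]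

lemma phi_lmul_ne (a : Bool) (A B : Mon) (h : ∀ A', A ≠ a :: A') (z : F ⊗[ℚ] F) :
    phi A B ((mono [a] ⊗ₜ[ℚ] (1:F)) * z) = 0 := by
  induction z using TensorProduct.induction_on with
  | zero => simp
  | tmul p q =>
      rw [Algebra.TensorProduct.tmul_mul_tmul, one_mul, phi_tmul, ev_mul_ne a A h, zero_mul]
  | add u v hu hv => rw [mul_add, map_add, hu, hv, add_zero]

lemma ev_B_cF_mul (B' : Mon) (y : F) : ev (true :: B') (cF * y) = 0 := by
  rw [show (cF : F) = mono [false] from rfl]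
  exact ev_mul_ne false (true :: B') (fun A' h => by simp at h) y

lemma phi_dMon (B' : Mon) : ∀ (w A : Mon), (A = [] ∨ ∃ A'', A = A'' ++ [true]) →
    phi A (true :: B') (dMon w) = if w = A ++ false :: true :: B' then 2 else 0 := by
  intro w
  induction w with
  | nil =>
      intro A hA
      rw [show dMon [] = 0 from rfl, map_zero, if_neg (by simp)]
  | cons a t ih =>
      intro A hA
      rw [show dMon (a :: t)
          = dLetter a * ((1:F) ⊗ₜ[ℚ] mono t) + (mono [a] ⊗ₜ[ℚ] (1:F)) * dMon t from rfl,
        map_add]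
      match A, hA with
      | [], _ =>
          rw [phi_lmul_ne a [] _ (fun A' h => by simp at h), add_zero]
          cases a
          · rw [dletter_false_mul, map_smul, phi_tmul, ev_one, if_pos rfl, one_mul, ev_mono,
              smul_eq_mul]
            by_cases ht : t = true :: B'
            · rw [if_pos ht, if_pos (by rw [ht]; rfl)]; norm_num
            · rw [if_neg ht, if_neg (fun hh => ht (by simpa using hh))]; norm_num
          · rw [dletter_true_mul, map_add, phi_tmul, phi_tmul, ev_B_cF_mul,
              show (cF : F) = mono [false] from rfl, ev_mono, if_neg (by simp), ev_one,
              if_pos rfl, if_neg (by simp)]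
            ring
      | (b :: A'), hA =>
          have hterm1 : phi (b :: A') (true :: B') (dLetter a * ((1:F) ⊗ₜ[ℚ] mono t)) = 0 := by
            cases a
            · rw [dletter_false_mul, map_smul, phi_tmul, ev_one, if_neg (by simp), zero_mul,
                smul_zero]
            · rw [dletter_true_mul, map_add, phi_tmul, phi_tmul, ev_B_cF_mul, mul_zero,
                add_zero, show (cF : F) = mono [false] from rfl, ev_mono]
              rw [if_neg, zero_mul]
              intro hh
              rcases hA with h | ⟨A'', h2⟩
              · simp at h
              · rw [← hh] at h2
                rcases A'' with _ | ⟨c, A'''⟩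
                · simp at h2
                · have := congrArg List.length h2
                  simp at this
          rw [hterm1, zero_add]
          by_cases hba : b = a
          · subst hba
            have hA' : A' = [] ∨ ∃ A'', A' = A'' ++ [true] := by
              rcases hA with h | ⟨A'', h2⟩
              · simp at h
              · rcases A'' with _ | ⟨c, A'''⟩
                · simp at h2; left; exact h2.2
                · right
                  refine ⟨A''', ?_⟩
                  have h3 := (List.cons.injEq b A' c (A''' ++ [true])).mp (by simpa using h2)
                  exact h3.2
            rw [phi_lmul_cons, ih A' hA']
            by_cases ht : t = A' ++ false :: true :: B'
            · rw [if_pos ht, if_pos (by rw [ht]; rfl)]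
            · rw [if_neg ht, if_neg (fun hh => ht (by simpa using hh))]
          · rw [phi_lmul_ne a _ _ (fun A'' h => hba ((List.cons.injEq b A' a A'').mp h).1)]
            rw [if_neg (fun hh => hba (((List.cons.injEq a t b (A' ++ false :: true :: B')).mp (by simpa using hh)).1.symm))]


lemma phi_Delta (A : Mon) (B' : Mon) (hA : A = [] ∨ ∃ A'', A = A'' ++ [true]) (x : F) :
    phi A (true :: B') (Delta x) = 2 * x.coeff (FreeMonoid.ofList (A ++ false :: true :: B')) := by
  have h : (phi A (true :: B')).comp Delta = (2:ℚ) • ev (A ++ false :: true :: B') := by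
    apply F_lhom_ext
    intro w b
    rw [finsupp_single_eq_smul_mono]
    simp only [map_smul, LinearMap.comp_apply, LinearMap.smul_apply]
    show b • phi A (true :: B') (Delta (mono (FreeMonoid.toList w)))
        = b • (2:ℚ) • ev (A ++ false :: true :: B') (mono (FreeMonoid.toList w))
    rw [Delta_mono, phi_dMon B' (FreeMonoid.toList w) A hA, ev_mono]
    by_cases hw : FreeMonoid.toList w = A ++ false :: true :: B'
    · rw [if_pos hw, if_pos hw, smul_eq_mul, smul_eq_mul, smul_eq_mul]; ring
    · rw [if_neg hw, if_neg hw]; simp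
  have h2 := LinearMap.congr_fun h x
  simp only [LinearMap.comp_apply, LinearMap.smul_apply, smul_eq_mul] at h2
  rw [h2, ev_apply]


/-- For all cd-monomials `u, v`: `β(d u d c d v) = β(d u* d c d v)`. -/
theorem beta_dudcdv (u v : Mon) :
    beta (true :: u ++ [true, false, true] ++ v)
      = beta (true :: u.reverse ++ [true, false, true] ++ v) := by
  set W₁ : Mon := true :: u ++ [true, false, true] ++ v with hW₁def
  set W₂ : Mon := true :: u.reverse ++ [true, false, true] ++ v with hW₂def
  set A₁ : Mon := true :: (u ++ [true]) with hA₁def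
  set A₂ : Mon := true :: (u.reverse ++ [true]) with hA₂def
  have hW₁ : W₁ = A₁ ++ false :: true :: v := by simp [hW₁def, hA₁def]
  have hW₂ : W₂ = A₂ ++ false :: true :: v := by simp [hW₂def, hA₂def]
  have hA₁ : A₁ = [] ∨ ∃ A'', A₁ = A'' ++ [true] := Or.inr ⟨true :: u, by simp [hA₁def]⟩
  have hA₂ : A₂ = [] ∨ ∃ A'', A₂ = A'' ++ [true] := Or.inr ⟨true :: u.reverse, by simp [hA₂def]⟩
  have hdeg : deg W₂ = deg W₁ := by
    simp [deg, hW₁def, hW₂def, List.count_append, List.length_append]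
  have hArev : A₁.reverse = A₂ := by simp [hA₁def, hA₂def]
  have hphi : phi A₁ (true :: v) (Delta (Psi (deg W₁))) = phi A₂ (true :: v) (Delta (Psi (deg W₁))) := by
    rw [Delta_Psi, map_sum, map_sum]
    refine Finset.sum_congr rfl fun k hk => ?_
    rw [map_smul, map_smul, phi_tmul, phi_tmul, ev_apply, ev_apply, coeff_rev k A₁, hArev]
    rfl
  have h₁ := phi_Delta A₁ v hA₁ (Psi (deg W₁))
  have h₂ := phi_Delta A₂ v hA₂ (Psi (deg W₂))
  have hb1 : beta W₁ = (Psi (deg W₁)).coeff (FreeMonoid.ofList (A₁ ++ false :: true :: v)) := by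
    rw [beta, ← hW₁]
  have hb2 : beta W₂ = (Psi (deg W₂)).coeff (FreeMonoid.ofList (A₂ ++ false :: true :: v)) := by
    rw [beta, ← hW₂]
  have : 2 * beta W₁ = 2 * beta W₂ := by
    rw [hb1, hb2, ← h₁, ← h₂, hdeg, hphi]
  exact mul_left_cancel₀ two_ne_zero this
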